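/- For N = 2n and r ≥ 1, the trace of the order-r transfer matrix T^{(r)}(θ) = ∑_{a=1}^{N} T^{(r)}_{aa}(θ), built via r-fold coproduct from the blocks T^{(1)}_{ab}(θ) = f_{ba}^{(+)}(θ)(ba) + f_{ba}^{(-)}(θ)(b̄ā) with f_{ba}^{(±)}(θ) = (1/2)(e^{m_{ba}^{(+)}θ} ± e^{m_{ba}^{(-)}θ}), equals 2∑_{i=1}^{n} e^{r·m_{ii}^{(+)}θ}. -/

import Mathlib

open Matrix

noncomputable section

/-- The `N × N` matrix unit `(ab)`. -/
def E {N : ℕ} (a b : Fin N) : Matrix (Fin N) (Fin N) ℂ := Matrix.single a b 1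

/-- `f_{ba}^{(ε)}(θ) = (1/2)(e^{m_{ba}^{(+)}θ} ± e^{m_{ba}^{(-)}θ})`,
the sign `ε` coded by a Boolean (`true ↦ +`). -/
def f {N : ℕ} (m : Bool → Fin N → Fin N → ℝ) (ε : Bool) (b a : Fin N) (θ : ℝ) : ℂ :=
  (1 / 2 : ℂ) * ((Real.exp (m true b a * θ) : ℂ) +
    (if ε then 1 else -1) * (Real.exp (m false b a * θ) : ℂ))

/-- The order-1 monodromy blocks
`T^{(1)}_{ab}(θ) = f_{ba}^{(+)}(θ)(ba) + f_{ba}^{(-)}(θ)(b̄ā)`. -/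
def T1 {N : ℕ} (m : Bool → Fin N → Fin N → ℝ) (θ : ℝ) (a b : Fin N) :
    Matrix (Fin N) (Fin N) ℂ :=
  f m true b a θ • E b a + f m false b a θ • E b.rev a.rev

/-- Tensor product of an `N × N` matrix with a matrix on `(ℂ^N)^{⊗ r}`. -/
def tensorCons {N r : ℕ} (A : Matrix (Fin N) (Fin N) ℂ)
    (B : Matrix (Fin r → Fin N) (Fin r → Fin N) ℂ) :
    Matrix (Fin (r + 1) → Fin N) (Fin (r + 1) → Fin N) ℂ :=
  fun x y => A (x 0) (y 0) * B (fun i => x i.succ) (fun i => y i.succ)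

/-- The order-`r` monodromy blocks, built by the `r`-fold coproduct
`T^{(r)}_{ab} = ∑_{c₁,…,c_{r-1}} T^{(1)}_{ac₁} ⊗ T^{(1)}_{c₁c₂} ⊗ ⋯ ⊗ T^{(1)}_{c_{r-1}b}`. -/
def Trm {N : ℕ} (m : Bool → Fin N → Fin N → ℝ) (θ : ℝ) :
    (r : ℕ) → Fin N → Fin N → Matrix (Fin r → Fin N) (Fin r → Fin N) ℂ
  | 0, a, b => if a = b then 1 else 0
  | r + 1, a, b => ∑ c : Fin N, tensorCons (T1 m θ a c) (Trm m θ r c b)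

/-- Embedding of `{1,…,n}` into `{1,…,2n}`. -/
def emb {n : ℕ} (i : Fin n) : Fin (2 * n) := Fin.castLE (by omega) i

/-!
Traces factor through tensor products, and `trace T^{(1)}_{ac}` vanishes unless `a = c`, in which
case the matrix units `(aa)` and `(āā)` contribute `f^{(+)}_{aa} + f^{(-)}_{aa} = e^{m^{(+)}_{aa} θ}`.
Hence `trace T^{(r)}_{ab} = δ_{ab} e^{r m^{(+)}_{aa} θ}`, and since `m^{(+)}_{āā} = m^{(+)}_{aa}`, the
indices `a > n` contribute the same as their bars `ā ≤ n`.
-/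

theorem f_true_add_f_false {N : ℕ} (m : Bool → Fin N → Fin N → ℝ) (b a : Fin N) (θ : ℝ) :
    f m true b a θ + f m false b a θ = Real.exp (m true b a * θ) := by
  simp only [f, if_true, Bool.false_eq_true, if_false]
  ring

theorem trace_T1 {N : ℕ} (m : Bool → Fin N → Fin N → ℝ) (θ : ℝ) (a c : Fin N) :
    trace (T1 m θ a c) = if a = c then (Real.exp (m true a a * θ) : ℂ) else 0 := by
  by_cases h : a = c
  · subst h
    simp only [T1, E, trace_add, trace_smul, trace_single_eq_same, smul_eq_mul, mul_one,
      f_true_add_f_false, if_true]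
  · have h' : a.rev ≠ c.rev := Fin.rev_injective.ne h
    simp only [T1, E, trace_add, trace_smul, trace_single_eq_of_ne _ _ _ (Ne.symm h),
      trace_single_eq_of_ne _ _ _ (Ne.symm h'), smul_zero, add_zero, if_neg h]

theorem trace_tensorCons {N r : ℕ} (A : Matrix (Fin N) (Fin N) ℂ)
    (B : Matrix (Fin r → Fin N) (Fin r → Fin N) ℂ) :
    trace (tensorCons A B) = trace A * trace B := by
  rw [trace, ← (Fin.consEquiv fun _ => Fin N).sum_comp, Fintype.sum_prod_type, trace, trace,
    Finset.sum_mul_sum]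
  rfl

theorem trace_Trm {N : ℕ} (m : Bool → Fin N → Fin N → ℝ) (θ : ℝ) (r : ℕ) (a b : Fin N) :
    trace (Trm m θ r a b) = if a = b then (Real.exp (m true a a * θ) : ℂ) ^ r else 0 := by
  induction r generalizing a with
  | zero => by_cases h : a = b <;> simp [Trm, h]
  | succ r ih =>
    simp only [Trm, trace_sum, trace_tensorCons, trace_T1, ih, ite_mul, zero_mul,
      Finset.sum_ite_eq, Finset.mem_univ, if_true]
    split_ifs <;> ring

theorem sum_fin_add_self_of_rev_invariant {M : Type*} [AddCommMonoid M] {k : ℕ}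
    (g : Fin (k + k) → M) (hg : ∀ a, g a.rev = g a) :
    ∑ a, g a = 2 • ∑ i : Fin k, g (Fin.castAdd k i) := by
  have hnat : ∀ i : Fin k, Fin.natAdd k i = (Fin.castAdd k i.rev).rev := fun i => by
    ext; simp only [Fin.val_natAdd, Fin.val_rev, Fin.val_castAdd]; omega
  rw [Fin.sum_univ_add, two_nsmul]
  simp only [hnat, hg]
  exact congrArg _ (Equiv.sum_comp Fin.revPerm fun i => g (Fin.castAdd k i))

theorem sum_fin_two_mul_of_rev_invariant {M : Type*} [AddCommMonoid M] {n : ℕ}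
    (g : Fin (2 * n) → M) (hg : ∀ a, g a.rev = g a) :
    ∑ a, g a = 2 • ∑ i : Fin n, g (emb i) := by
  rw [← (finCongr (two_mul n)).symm.sum_comp]
  exact sum_fin_add_self_of_rev_invariant _ fun a => by simp [Fin.cast_rev, hg]

theorem stmt_9_general (n : ℕ) (r : ℕ)
    (m : Bool → Fin (2 * n) → Fin (2 * n) → ℝ)
    (hm : ∀ ε a b, m ε a b = m ε a.rev b ∧ m ε a b = m ε a b.rev) (θ : ℝ) :
    Matrix.trace (∑ a : Fin (2 * n), Trm m θ r a a) =
      2 * ∑ i : Fin n, (Real.exp (r * m true (emb i) (emb i) * θ) : ℂ) := by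
  have hrev : ∀ a, m true a.rev a.rev = m true a a := fun a => by
    rw [← (hm true a a.rev).1, ← (hm true a a).2]
  have hpow : ∀ a, (Real.exp (m true a a * θ) : ℂ) ^ r = Real.exp (r * m true a a * θ) := by
    intro a
    rw [← Complex.ofReal_pow, ← Real.exp_nat_mul, mul_assoc]
  simp only [trace_sum, trace_Trm, if_true, hpow]
  rw [sum_fin_two_mul_of_rev_invariant _ fun a => by simp only [hrev], nsmul_eq_mul, Nat.cast_ofNat]

/-- For `N = 2n` and `r ≥ 1`, with parameters invariant under barring each index,
the order-`r` transfer matrix `𝐓^{(r)}(θ) = ∑_a T^{(r)}_{aa}(θ)` has trace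
`2 ∑_{i=1}^n e^{r m_{ii}^{(+)} θ}`. -/
theorem stmt_9 (n : ℕ) (r : ℕ) (hr : 1 ≤ r)
    (m : Bool → Fin (2 * n) → Fin (2 * n) → ℝ)
    (hm : ∀ ε a b, m ε a b = m ε a.rev b ∧ m ε a b = m ε a b.rev) (θ : ℝ) :
    Matrix.trace (∑ a : Fin (2 * n), Trm m θ r a a) =
      2 * ∑ i : Fin n, (Real.exp (r * m true (emb i) (emb i) * θ) : ℂ) :=
  stmt_9_general n r m hm θ
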